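/- For every real a > 0, every real η with 0 < η < 1/2, and every finite set S of points in ℝ², there exists an origin O = (O₁, O₂) with O₁ ∈ [0, a) and O₂ ∈ [0, a) such that the number of points p = (p₁, p₂) ∈ S satisfying both Int.fract((p₁ − O₁)/a) ∈ [η, 1−η] and Int.fract((p₂ − O₂)/a) ∈ [η, 1−η] is at least (1 − 2η)² · |S|. -/

import Mathlib

/-!
After scaling the period to `1`: for an origin `s` uniform on `[0,1)`, `Int.fract (y - s)` is
again uniform on `[0,1)`, so the expected number of points whose offset lies in `I` is
`|I ∩ [0,1)| · |T|`, and some origin does at least as well as the average. Choosing the first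
coordinate of the origin this way, and then the second one for the points already covered in
the first coordinate, covers a `|I ∩ [0,1)|²` fraction of the points.
-/

open Set MeasureTheory Finset

theorem setIntegral_Ico_comp_fract_sub (g : ℝ → ℝ) (y : ℝ) :
    ∫ s in Ico (0:ℝ) 1, g (Int.fract (y - s)) = ∫ u in Ico (0:ℝ) 1, g u := by
  have hIco (f : ℝ → ℝ) : ∫ s in Ico (0:ℝ) 1, f s = ∫ s in (0:ℝ)..1, f s := by
    rw [intervalIntegral.integral_of_le zero_le_one, integral_Ico_eq_integral_Ioo,
      integral_Ioc_eq_integral_Ioo]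
  calc ∫ s in Ico (0:ℝ) 1, g (Int.fract (y - s))
      = ∫ u in y - 1..y - 0, g (Int.fract u) := by
        rw [hIco]; exact intervalIntegral.integral_comp_sub_left (fun u => g (Int.fract u)) y
    _ = ∫ u in (0:ℝ)..1, g (Int.fract u) := by
        simpa using ((Int.fract_periodic ℝ).comp g).intervalIntegral_add_eq (y - 1) 0
    _ = ∫ u in Ico (0:ℝ) 1, g u := by
        rw [← hIco]
        exact setIntegral_congr_fun measurableSet_Ico fun u hu => by rw [Int.fract_eq_self.2 hu]

open Classical in
theorem exists_mem_Ico_mul_card_le_card_filter_fract_sub_mem {α : Type*} (T : Finset α)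
    (y : α → ℝ) {I : Set ℝ} (hI : MeasurableSet I) :
    ∃ s ∈ Ico (0:ℝ) 1, volume.real (I ∩ Ico 0 1) * #T ≤
      #{p ∈ T | Int.fract (y p - s) ∈ I} := by
  set μ := volume.restrict (Ico (0:ℝ) 1)
  have : IsProbabilityMeasure μ := ⟨by simp [μ]⟩
  set f : α → ℝ → ℝ := fun p s => I.indicator 1 (Int.fract (y p - s))
  have hf_int (p : α) : Integrable (f p) μ := by
    refine .of_bound ?_ 1 (ae_of_all _ fun s => ?_)
    · exact ((measurable_one.indicator hI).comp
        (measurable_const.sub measurable_id).fract).aestronglyMeasurable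
    · simp only [f, Set.indicator_apply]; split_ifs <;> simp
  have hf_integral (p : α) : ∫ s, f p s ∂μ = volume.real (I ∩ Ico 0 1) := by
    rw [setIntegral_Ico_comp_fract_sub (I.indicator 1), integral_indicator_one hI,
      measureReal_restrict_apply hI]
  obtain ⟨s, hs, hle⟩ :=
    exists_notMem_null_integral_le (integrable_finsetSum T fun p _ => hf_int p)
      (show μ (Ico 0 1)ᶜ = 0 by simp [μ])
  refine ⟨s, not_notMem.1 hs, ?_⟩
  calc volume.real (I ∩ Ico 0 1) * #T = ∫ s, ∑ p ∈ T, f p s ∂μ := by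
        rw [integral_finsetSum T fun p _ => hf_int p, sum_congr rfl fun p _ => hf_integral p,
          sum_const, nsmul_eq_mul, mul_comm]
    _ ≤ ∑ p ∈ T, f p s := hle
    _ = #{p ∈ T | Int.fract (y p - s) ∈ I} := by
        simp [f, Set.indicator_apply, sum_boole]

open Classical in
theorem exists_mem_Ico_sq_mul_card_le_card_filter_fract_sub_mem {α : Type*} (T : Finset α)
    (y₁ y₂ : α → ℝ) {I : Set ℝ} (hI : MeasurableSet I) :
    ∃ s₁ ∈ Ico (0:ℝ) 1, ∃ s₂ ∈ Ico (0:ℝ) 1, volume.real (I ∩ Ico 0 1) ^ 2 * #T ≤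
      #{p ∈ T | Int.fract (y₁ p - s₁) ∈ I ∧ Int.fract (y₂ p - s₂) ∈ I} := by
  obtain ⟨s₁, hs₁, h₁⟩ := exists_mem_Ico_mul_card_le_card_filter_fract_sub_mem T y₁ hI
  obtain ⟨s₂, hs₂, h₂⟩ := exists_mem_Ico_mul_card_le_card_filter_fract_sub_mem
    {p ∈ T | Int.fract (y₁ p - s₁) ∈ I} y₂ hI
  refine ⟨s₁, hs₁, s₂, hs₂, ?_⟩
  rw [filter_filter] at h₂
  calc volume.real (I ∩ Ico 0 1) ^ 2 * #T
      = volume.real (I ∩ Ico 0 1) * (volume.real (I ∩ Ico 0 1) * #T) := by ring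
    _ ≤ volume.real (I ∩ Ico 0 1) * #{p ∈ T | Int.fract (y₁ p - s₁) ∈ I} :=
        mul_le_mul_of_nonneg_left h₁ measureReal_nonneg
    _ ≤ _ := h₂

open Classical in
/-- Stencil-covering lemma: for any finite set `S` of points in the plane, there is an
origin `O = (O₁, O₂)` in `[0,a) × [0,a)` such that at least a `(1-2η)²` fraction of the
points of `S` are covered by the inner squares of the stencil, i.e. their offsets modulo
the period `a` lie in the middle fraction `[η, 1-η]` of the cell in each coordinate. -/
theorem stencil_covering (a η : ℝ) (ha : 0 < a) (hη0 : 0 < η) (hη : η < 1/2)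
    (S : Finset (ℝ × ℝ)) :
    ∃ O₁ O₂ : ℝ, O₁ ∈ Set.Ico (0:ℝ) a ∧ O₂ ∈ Set.Ico (0:ℝ) a ∧
      (1 - 2*η)^2 * (S.card : ℝ) ≤
        ((S.filter (fun p => Int.fract ((p.1 - O₁)/a) ∈ Set.Icc η (1-η) ∧
            Int.fract ((p.2 - O₂)/a) ∈ Set.Icc η (1-η))).card : ℝ) := by
  have hvol : volume.real (Icc η (1 - η) ∩ Ico 0 1) = 1 - 2 * η := by
    rw [Set.inter_eq_left.2 (Icc_subset_Ico hη0.le (by linarith)),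
      Real.volume_real_Icc_of_le (by linarith)]
    ring
  obtain ⟨s₁, hs₁, s₂, hs₂, h⟩ := exists_mem_Ico_sq_mul_card_le_card_filter_fract_sub_mem S
    (fun p => p.1 / a) (fun p => p.2 / a) (measurableSet_Icc (a := η) (b := 1 - η))
  have hscale {s : ℝ} (hs : s ∈ Ico (0:ℝ) 1) : a * s ∈ Ico 0 a :=
    ⟨mul_nonneg ha.le hs.1, mul_lt_of_lt_one_right ha hs.2⟩
  have hshift (x s : ℝ) : (x - a * s) / a = x / a - s := by field_simp
  refine ⟨a * s₁, a * s₂, hscale hs₁, hscale hs₂, ?_⟩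
  simp only [hshift, ← hvol]
  -- the two filters differ only in their (classical) decidability instances
  convert h
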